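/- arXiv:2306.13599 — 4 statements merged into one kernel-verified Lean document; each statement's English description precedes it below -/
import Mathlib

section
/- Let (B, ·) be a group and γ : B → Aut(B, ·) a map satisfying γ(γ(x)(y) · x) = γ(y) γ(x) for all x, y ∈ B. Define y ∘ x = γ(x)(y) · x. Then (B, ∘) is a group and (B, ·, ∘) is a (right) skew brace. -/
/-- A (right) skew brace: `(B, ·)` (the ambient group structure) and `(B, ∘)`
(given by `circ`, with unit `cone` and inverse `cinv`) are groups, related by
`((y · z) ∘ x) · x⁻¹ = ((y ∘ x) · x⁻¹) · ((z ∘ x) · x⁻¹)`. -/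
structure RightSkewBrace (B : Type*) [Group B] where
  circ : B → B → B
  circ_assoc : ∀ x y z : B, circ (circ x y) z = circ x (circ y z)
  cone : B
  cone_circ : ∀ x : B, circ cone x = x
  circ_cone : ∀ x : B, circ x cone = x
  cinv : B → B
  cinv_circ : ∀ x : B, circ (cinv x) x = cone
  circ_cinv : ∀ x : B, circ x (cinv x) = cone
  compat : ∀ x y z : B,
    circ (y * z) x * x⁻¹ = (circ y x * x⁻¹) * (circ z x * x⁻¹)

namespace RightSkewBrace

variable {B : Type*} [Group B]

/-- The gamma function: `γ(x)(y) = (y ∘ x) · x⁻¹`. -/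
def gamma (S : RightSkewBrace B) (x y : B) : B := S.circ y x * x⁻¹

/-- The star commutator: `x * y = x⁻¹ · (x ∘ y) · y⁻¹`. -/
def star (S : RightSkewBrace B) (x y : B) : B := x⁻¹ * S.circ x y * y⁻¹

/-- The commutator `[a, b] = a⁻¹ b⁻¹ a b` in the additive group `(B, ·)`. -/
def comm (a b : B) : B := a⁻¹ * b⁻¹ * a * b

/-- Membership in the annihilator `Ann(B) = Z(B,·) ∩ ker γ ∩ C_B(γ(B))`. -/
def inAnn (S : RightSkewBrace B) (c : B) : Prop :=
  (∀ x : B, c * x = x * c) ∧ (∀ y : B, S.gamma c y = y) ∧ (∀ y : B, S.gamma y c = c)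

/-- Membership in `B' = [B,B] · [B, γ(B)]`, the subgroup of `(B,·)` generated by
all additive commutators and all star commutators. -/
def inDerived (S : RightSkewBrace B) (x : B) : Prop :=
  x ∈ Subgroup.closure { z : B | ∃ a b : B, z = comm a b ∨ z = S.star a b }

/-- `B` is a bi-skew brace: `(B, ∘, ·)` is also a (right) skew brace, i.e. the
skew brace compatibility holds with the roles of the operations exchanged. -/
def IsBiSkew (S : RightSkewBrace B) : Prop :=
  ∀ x y z : B, S.circ (S.circ y z * x) (S.cinv x) =
    S.circ (S.circ (y * x) (S.cinv x)) (S.circ (z * x) (S.cinv x))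

/-- `B` is λ-homomorphic: `γ : (B, ·) → Aut(B, ·)` is a homomorphism,
`γ(x·y) = γ(x)γ(y)` (apply `γ(x)` first, maps acting on the right). -/
def IsLambdaHom (S : RightSkewBrace B) : Prop :=
  ∀ x y z : B, S.gamma (x * y) z = S.gamma y (S.gamma x z)

/-- `B` is inner: every `γ(y)` is an inner automorphism of `(B, ·)`. -/
def IsInner (S : RightSkewBrace B) : Prop :=
  ∀ y : B, ∃ t : B, ∀ x : B, S.gamma y x = t⁻¹ * x * t

end RightSkewBrace

open RightSkewBrace

/-- An isoclinism of skew braces, phrased on representatives: `xi` induces a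
skew brace isomorphism `B₁/Ann(B₁) → B₂/Ann(B₂)`, `theta` restricts to a skew
brace isomorphism `B₁' → B₂'`, and the pair is compatible with the additive
commutator map and the star commutator map. -/
structure Isoclinism {B₁ B₂ : Type*} [Group B₁] [Group B₂]
    (S₁ : RightSkewBrace B₁) (S₂ : RightSkewBrace B₂) where
  xi : B₁ → B₂
  theta : B₁ → B₂
  xi_surj : ∀ u : B₂, ∃ x : B₁, S₂.inAnn (u⁻¹ * xi x)
  xi_inj : ∀ x y : B₁, S₂.inAnn ((xi x)⁻¹ * xi y) → S₁.inAnn (x⁻¹ * y)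
  xi_congr : ∀ x y : B₁, S₁.inAnn (x⁻¹ * y) → S₂.inAnn ((xi x)⁻¹ * xi y)
  xi_mul : ∀ x y : B₁, S₂.inAnn ((xi (x * y))⁻¹ * (xi x * xi y))
  xi_circ : ∀ x y : B₁, S₂.inAnn ((xi (S₁.circ x y))⁻¹ * S₂.circ (xi x) (xi y))
  theta_maps : ∀ x : B₁, S₁.inDerived x → S₂.inDerived (theta x)
  theta_mul : ∀ x y : B₁, S₁.inDerived x → S₁.inDerived y →
    theta (x * y) = theta x * theta y
  theta_circ : ∀ x y : B₁, S₁.inDerived x → S₁.inDerived y →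
    theta (S₁.circ x y) = S₂.circ (theta x) (theta y)
  theta_inj : ∀ x y : B₁, S₁.inDerived x → S₁.inDerived y → theta x = theta y → x = y
  theta_surj : ∀ u : B₂, S₂.inDerived u → ∃ x : B₁, S₁.inDerived x ∧ theta x = u
  comm_comm : ∀ x y : B₁, theta (comm x y) = comm (xi x) (xi y)
  star_comm : ∀ x y : B₁, theta (S₁.star x y) = S₂.star (xi x) (xi y)

/-!
Every `γ(x)` fixes `1`, so `1` is a left identity for `y ∘ x = γ(x)(y) · x`; surjectivity of
`γ(x)` gives `y` with `γ(x)(y) = x⁻¹`, a left inverse of `x`; and the functional equation for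
`γ` is exactly associativity of `∘`. A monoid-like structure with left identity and left
inverses is a group, and the brace compatibility reduces to `γ(x)` being a homomorphism.
-/

theorem rightAxioms_of_leftAxioms {α : Type*} (op : α → α → α) (e : α) (inv : α → α)
    (assoc : ∀ a b c, op (op a b) c = op a (op b c)) (left_id : ∀ a, op e a = a)
    (left_inv : ∀ a, op (inv a) a = e) :
    (∀ a, op a e = a) ∧ ∀ a, op a (inv a) = e := by
  let _ : Group α := @Group.ofLeftAxioms α ⟨op⟩ ⟨inv⟩ ⟨e⟩ assoc left_id left_inv
  exact ⟨mul_one, mul_inv_cancel⟩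

section Gamma

variable {B : Type*} [Group B] {g : B → B → B}

theorem gamma_map_one (hmul : ∀ x y z : B, g x (y * z) = g x y * g x z) (x : B) :
    g x 1 = 1 :=
  (MonoidHom.mk' (g x) (hmul x)).map_one

theorem gamma_circ_assoc (hmul : ∀ x y z : B, g x (y * z) = g x y * g x z)
    (hfe : ∀ x y z : B, g (g x y * x) z = g x (g y z)) (x y z : B) :
    g z (g y x * y) * z = g (g z y * z) x * (g z y * z) := by
  rw [hmul, hfe, mul_assoc]

theorem gamma_circ_compat (hmul : ∀ x y z : B, g x (y * z) = g x y * g x z) (x y z : B) :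
    (g x (y * z) * x) * x⁻¹ = ((g x y * x) * x⁻¹) * ((g x z * x) * x⁻¹) := by
  rw [hmul]
  group

end Gamma

/-- conversely, if `(B, ·)` is a group and `γ : B → Aut(B, ·)`
satisfies `γ(γ(x)(y) · x) = γ(y) γ(x)`, then `y ∘ x := γ(x)(y) · x` makes
`(B, ∘)` a group and `(B, ·, ∘)` a right skew brace. -/
theorem skewBrace_of_gamma {B : Type*} [Group B] (g : B → B → B)
    (hbij : ∀ x : B, Function.Bijective (g x))
    (hmul : ∀ x y z : B, g x (y * z) = g x y * g x z)
    (hfe : ∀ x y z : B, g (g x y * x) z = g x (g y z)) :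
    -- write `y ∘ x := g x y * x`; then `(B, ∘)` is a group:
    (∀ x y z : B, g z (g y x * y) * z = g (g z y * z) x * (g z y * z)) ∧
    (∃ e : B, (∀ x : B, g x e * x = x) ∧ (∀ x : B, g e x * e = x) ∧
      ∃ i : B → B, (∀ x : B, g x (i x) * x = e) ∧ (∀ x : B, g (i x) x * i x = e)) ∧
    -- and `(B, ·, ∘)` is a right skew brace:
    (∀ x y z : B, (g x (y * z) * x) * x⁻¹ =
      ((g x y * x) * x⁻¹) * ((g x z * x) * x⁻¹)) := by
  have left_id (x : B) : g x 1 * x = x := by rw [gamma_map_one hmul, one_mul]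
  choose i hi using fun x => (hbij x).2 x⁻¹
  have left_inv (x : B) : g x (i x) * x = 1 := by rw [hi, inv_mul_cancel]
  obtain ⟨right_id, right_inv⟩ := rightAxioms_of_leftAxioms (fun y x => g x y * x) 1 i
    (gamma_circ_assoc hmul hfe) left_id left_inv
  exact ⟨gamma_circ_assoc hmul hfe, ⟨1, left_id, right_id, i, left_inv, right_inv⟩,
    gamma_circ_compat hmul⟩
end

section
/- For a (right) skew brace (B, ·, ∘), the following are equivalent: (1) B is a bi-skew brace, i.e. (B, ∘, ·) is also a skew brace; (2) the gamma function is an anti-homomorphism of (B, ·) into Aut(B, ·), i.e. γ(y · z) = γ(z) γ(y) for all y, z ∈ B (apply γ(z) first); (3) for all x, y, z ∈ B, x⁻¹ · γ(y·z)(x) = x⁻¹ · γ(y)(γ(z)(x)). -/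
open RightSkewBrace

namespace RightSkewBrace

variable {B : Type*} [Group B] (S : RightSkewBrace B)

lemma gamma_mul (x y z : B) : S.gamma x (y * z) = S.gamma x y * S.gamma x z :=
  S.compat x y z

lemma gamma_one_right (x : B) : S.gamma x 1 = 1 := by
  simpa using S.gamma_mul x 1 1

lemma circ_eq_gamma_mul (x y : B) : S.circ y x = S.gamma x y * x :=
  (inv_mul_cancel_right _ x).symm

lemma cone_eq_one : S.cone = 1 := by
  have one_circ : S.circ 1 S.cone = S.cone := by
    rw [S.circ_eq_gamma_mul, S.gamma_one_right, one_mul]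
  rw [← one_circ, S.circ_cone]

lemma gamma_cone (y : B) : S.gamma S.cone y = y := by
  rw [gamma, S.circ_cone, S.cone_eq_one, inv_one, mul_one]

lemma gamma_circ (x y b : B) : S.gamma (S.circ x y) b = S.gamma y (S.gamma x b) :=
  calc S.gamma (S.circ x y) b
      = S.circ (S.circ b x) y * (S.gamma y x * y)⁻¹ := by
        rw [gamma, S.circ_assoc, S.circ_eq_gamma_mul y x]
    _ = S.gamma y (S.gamma x b * x) * (S.gamma y x)⁻¹ := by
        rw [S.circ_eq_gamma_mul y, S.circ_eq_gamma_mul x b]; group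
    _ = S.gamma y (S.gamma x b) := by
        rw [S.gamma_mul, mul_inv_cancel_right]

lemma gamma_cinv_gamma (x b : B) : S.gamma (S.cinv x) (S.gamma x b) = b := by
  rw [← S.gamma_circ, S.circ_cinv, S.gamma_cone]

lemma gamma_gamma_cinv (x b : B) : S.gamma x (S.gamma (S.cinv x) b) = b := by
  rw [← S.gamma_circ, S.cinv_circ, S.gamma_cone]

lemma mul_eq_circ (x y : B) : y * x = S.circ (S.gamma (S.cinv x) y) x := by
  rw [S.circ_eq_gamma_mul, S.gamma_gamma_cinv]

lemma circ_cinv_of_mul (x y : B) : S.circ (y * x) (S.cinv x) = S.gamma (S.cinv x) y := by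
  rw [S.mul_eq_circ x y, S.circ_assoc, S.circ_cinv, S.circ_cone]

lemma cinv_cinv (x : B) : S.cinv (S.cinv x) = x := by
  calc S.cinv (S.cinv x)
      = S.circ (S.cinv (S.cinv x)) (S.circ (S.cinv x) x) := by rw [S.cinv_circ, S.circ_cone]
    _ = x := by rw [← S.circ_assoc, S.cinv_circ, S.cone_circ]

lemma isBiSkew_iff_gamma_circ :
    S.IsBiSkew ↔ ∀ a y z : B, S.gamma a (S.circ y z) = S.circ (S.gamma a y) (S.gamma a z) := by
  simp only [IsBiSkew, circ_cinv_of_mul]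
  refine ⟨fun h a => ?_, fun h x => h (S.cinv x)⟩
  simpa only [cinv_cinv] using h (S.cinv a)

def GammaEquivariant : Prop :=
  ∀ a z y : B, S.gamma (S.gamma a z) (S.gamma a y) = S.gamma a (S.gamma z y)

lemma gamma_circ_iff_gammaEquivariant :
    (∀ a y z : B, S.gamma a (S.circ y z) = S.circ (S.gamma a y) (S.gamma a z)) ↔
      S.GammaEquivariant := by
  simp only [circ_eq_gamma_mul, gamma_mul, mul_left_inj]
  exact ⟨fun h a z y => (h a y z).symm, fun h a y z => (h a z y).symm⟩

lemma gamma_antihom_iff_gammaEquivariant :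
    (∀ y z w : B, S.gamma (y * z) w = S.gamma y (S.gamma z w)) ↔ S.GammaEquivariant := by
  constructor
  · intro h a z y
    have := h (S.gamma a z) a y
    rwa [S.mul_eq_circ a, S.gamma_cinv_gamma, S.gamma_circ, eq_comm] at this
  · intro h y z w
    rw [S.mul_eq_circ z y, S.gamma_circ, ← h z _ w, S.gamma_gamma_cinv]

end RightSkewBrace

/-- for a right skew brace the following are equivalent:
(1) it is a bi-skew brace; (2) `γ` is an anti-homomorphism of `(B, ·)`,
`γ(y·z) = γ(z) γ(y)` (apply `γ(z)` first); (3) `x⁻¹·γ(y·z)(x) = x⁻¹·γ(y)(γ(z)(x))`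
for all `x, y, z`. -/
theorem biSkew_tfae {B : Type*} [Group B] (S : RightSkewBrace B) :
    List.TFAE
      [ S.IsBiSkew,
        ∀ y z w : B, S.gamma (y * z) w = S.gamma y (S.gamma z w),
        ∀ x y z : B, x⁻¹ * S.gamma (y * z) x = x⁻¹ * S.gamma y (S.gamma z x) ] := by
  tfae_have 1 ↔ 2 := S.isBiSkew_iff_gamma_circ.trans <|
    S.gamma_circ_iff_gammaEquivariant.trans S.gamma_antihom_iff_gammaEquivariant.symm
  tfae_have 2 → 3 := fun h x y z => by rw [h]
  tfae_have 3 → 2 := fun h y z w => mul_left_cancel (h w y z)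
  tfae_finish
end

section
/- Being a λ-homomorphic skew brace is invariant under isoclinism: if skew braces B₁ and B₂ are isoclinic, then B₁ is λ-homomorphic if and only if B₂ is λ-homomorphic. -/
open RightSkewBrace

section Aux
variable {B : Type*} [Group B] (S : RightSkewBrace B)

lemma aux_circ_one (x : B) : S.circ 1 x = x := by
  have h := S.compat x 1 1
  rw [one_mul] at h
  have h1 : S.circ 1 x * x⁻¹ = 1 := (left_eq_mul.mp h)
  exact mul_inv_eq_one.mp h1

lemma aux_gamma_mul (x a b : B) : S.gamma x (a * b) = S.gamma x a * S.gamma x b :=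
  S.compat x a b

lemma aux_gamma_one (x : B) : S.gamma x 1 = 1 := by
  simp [gamma, aux_circ_one]

lemma aux_gamma_inv (x a : B) : S.gamma x a⁻¹ = (S.gamma x a)⁻¹ := by
  have h : S.gamma x a⁻¹ * S.gamma x a = 1 := by
    rw [← aux_gamma_mul, inv_mul_cancel, aux_gamma_one]
  exact eq_inv_of_mul_eq_one_left h

lemma aux_gamma_circ (x y z : B) :
    S.gamma (S.circ x y) z = S.gamma y (S.gamma x z) := by
  unfold gamma
  have h := S.compat y (S.circ z x) x⁻¹
  rw [h]
  have h2 : S.circ x⁻¹ y * y⁻¹ = (S.circ x y * y⁻¹)⁻¹ := aux_gamma_inv S y x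
  rw [h2, S.circ_assoc]
  group

lemma aux_star_eq (z t : B) : S.star z t = z⁻¹ * S.gamma t z := by
  unfold RightSkewBrace.star gamma
  group

lemma aux_lambda_iff :
    S.IsLambdaHom ↔ ∀ x y z : B, S.star z (x * y) = S.star z (S.circ x y) := by
  constructor
  · intro h x y z
    rw [aux_star_eq, aux_star_eq, h x y z, ← aux_gamma_circ]
  · intro h x y z
    have := h x y z
    rw [aux_star_eq, aux_star_eq] at this
    have h2 : S.gamma (x * y) z = S.gamma (S.circ x y) z := by
      exact mul_left_cancel this
    rw [h2, aux_gamma_circ]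

variable {c a b : B}

lemma aux_circ_ann_right (hc : S.inAnn c) (y : B) : S.circ y c = y * c := by
  have h := hc.2.1 y
  unfold gamma at h
  exact mul_inv_eq_iff_eq_mul.mp h

lemma aux_ann_inv (hc : S.inAnn c) : S.inAnn c⁻¹ := by
  refine ⟨fun x => ((show Commute c x from hc.1 x).inv_left).eq, ?_, ?_⟩
  · have hy : ∀ y, S.circ y (S.cinv c) = y * c⁻¹ := by
      intro y
      have h1 : S.circ (S.circ y (S.cinv c)) c = y := by
        rw [S.circ_assoc, S.cinv_circ, S.circ_cone]
      rw [aux_circ_ann_right S hc] at h1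
      exact eq_mul_inv_iff_mul_eq.mpr h1
    have hcinv : S.cinv c = c⁻¹ := by
      have := hy 1
      rwa [aux_circ_one, one_mul] at this
    intro y
    unfold gamma
    rw [← hcinv, hy y, hcinv]
    group
  · intro y
    rw [aux_gamma_inv, hc.2.2 y]

lemma aux_star_right_ann (ha : S.inAnn a) (x t : B) : S.star x (t * a) = S.star x t := by
  unfold RightSkewBrace.star
  have h2 : S.circ x (t * a) = S.circ x t * a := by
    rw [← aux_circ_ann_right S ha t, ← S.circ_assoc, aux_circ_ann_right S ha]
  rw [h2, mul_inv_rev]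
  have hcen := ha.1
  calc x⁻¹ * (S.circ x t * a) * (a⁻¹ * t⁻¹) = x⁻¹ * S.circ x t * t⁻¹ := by group

lemma aux_star_left_ann (ha : S.inAnn a) (x t : B) : S.star (x * a) t = S.star x t := by
  have h1 : S.circ a t * t⁻¹ = a := ha.2.2 t
  have h2 : S.circ (x * a) t = S.circ x t * t⁻¹ * a * t := by
    have h := S.compat t x a
    rw [h1] at h
    exact mul_inv_eq_iff_eq_mul.mp h
  unfold RightSkewBrace.star
  rw [h2]
  calc (x * a)⁻¹ * (S.circ x t * t⁻¹ * a * t) * t⁻¹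
      = a⁻¹ * ((x⁻¹ * S.circ x t * t⁻¹) * a) := by group
    _ = a⁻¹ * (a * (x⁻¹ * S.circ x t * t⁻¹)) := by rw [← ha.1 (x⁻¹ * S.circ x t * t⁻¹)]
    _ = x⁻¹ * S.circ x t * t⁻¹ := by group

lemma aux_circ_mul_ann (ha : S.inAnn a) (hb : S.inAnn b) (p q : B) :
    S.circ (p * a) (q * b) = S.circ p q * a * b := by
  have h1 : S.circ (p * a) (q * b) = S.circ (p * a) q * b := by
    rw [← aux_circ_ann_right S hb q, ← S.circ_assoc, aux_circ_ann_right S hb]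
  have h3 : S.circ (p * a) q = S.circ p q * a := by
    have h := S.compat q p a
    have hg : S.circ a q * q⁻¹ = a := ha.2.2 q
    rw [hg] at h
    have h4 := mul_inv_eq_iff_eq_mul.mp h
    rw [h4]
    calc S.circ p q * q⁻¹ * a * q = S.circ p q * q⁻¹ * (a * q) := by group
      _ = S.circ p q * q⁻¹ * (q * a) := by rw [ha.1 q]
      _ = S.circ p q * a := by group
  rw [h1, h3]

lemma aux_inDerived_star (x y : B) : S.inDerived (S.star x y) :=
  Subgroup.subset_closure ⟨x, y, Or.inr rfl⟩

end Aux

/-- being λ-homomorphic is invariant under isoclinism. -/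
theorem isLambdaHom_iff_of_isoclinic {B₁ B₂ : Type*} [Group B₁] [Group B₂]
    (S₁ : RightSkewBrace B₁) (S₂ : RightSkewBrace B₂)
    (e : Isoclinism S₁ S₂) : S₁.IsLambdaHom ↔ S₂.IsLambdaHom := by
  rw [aux_lambda_iff S₁, aux_lambda_iff S₂]
  constructor
  · intro h u v w
    obtain ⟨x, hx⟩ := e.xi_surj u
    obtain ⟨y, hy⟩ := e.xi_surj v
    obtain ⟨z, hz⟩ := e.xi_surj w
    set a : B₂ := u⁻¹ * e.xi x with hadef
    set b : B₂ := v⁻¹ * e.xi y with hbdef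
    set c : B₂ := w⁻¹ * e.xi z with hcdef
    have ha' : S₂.inAnn a⁻¹ := aux_ann_inv S₂ hx
    have hb' : S₂.inAnn b⁻¹ := aux_ann_inv S₂ hy
    have hc' : S₂.inAnn c⁻¹ := aux_ann_inv S₂ hz
    have hu : u = e.xi x * a⁻¹ := by rw [hadef]; group
    have hv : v = e.xi y * b⁻¹ := by rw [hbdef]; group
    have hw : w = e.xi z * c⁻¹ := by rw [hcdef]; group
    set m : B₂ := (e.xi (x * y))⁻¹ * (e.xi x * e.xi y) with hmdef
    have hm : S₂.inAnn m := e.xi_mul x y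
    set n : B₂ := (e.xi (S₁.circ x y))⁻¹ * S₂.circ (e.xi x) (e.xi y) with hndef
    have hn : S₂.inAnn n := e.xi_circ x y
    have e1 : S₂.star w (u * v) = e.theta (S₁.star z (x * y)) := by
      have huv : u * v = ((e.xi (x * y) * m) * a⁻¹) * b⁻¹ := by
        have hxy : e.xi (x * y) * m = e.xi x * e.xi y := by rw [hmdef]; group
        rw [hxy, hu, hv]
        calc e.xi x * a⁻¹ * (e.xi y * b⁻¹)
            = e.xi x * (a⁻¹ * e.xi y) * b⁻¹ := by group
          _ = e.xi x * (e.xi y * a⁻¹) * b⁻¹ := by rw [ha'.1 (e.xi y)]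
          _ = e.xi x * e.xi y * a⁻¹ * b⁻¹ := by group
      rw [hw, aux_star_left_ann S₂ hc', huv, aux_star_right_ann S₂ hb',
        aux_star_right_ann S₂ ha', aux_star_right_ann S₂ hm, ← e.star_comm]
    have e2 : S₂.star w (S₂.circ u v) = e.theta (S₁.star z (S₁.circ x y)) := by
      have huv : S₂.circ u v = ((e.xi (S₁.circ x y) * n) * a⁻¹) * b⁻¹ := by
        have hxy : e.xi (S₁.circ x y) * n = S₂.circ (e.xi x) (e.xi y) := by
          rw [hndef]; group
        rw [hxy, hu, hv, aux_circ_mul_ann S₂ ha' hb']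
      rw [hw, aux_star_left_ann S₂ hc', huv, aux_star_right_ann S₂ hb',
        aux_star_right_ann S₂ ha', aux_star_right_ann S₂ hn, ← e.star_comm]
    rw [e1, e2, h x y z]
  · intro h x y z
    apply e.theta_inj _ _ (aux_inDerived_star S₁ z (x * y))
      (aux_inDerived_star S₁ z (S₁.circ x y))
    rw [e.star_comm, e.star_comm]
    set m : B₂ := (e.xi (x * y))⁻¹ * (e.xi x * e.xi y) with hmdef
    have hm' : S₂.inAnn m⁻¹ := aux_ann_inv S₂ (e.xi_mul x y)
    set n : B₂ := (e.xi (S₁.circ x y))⁻¹ * S₂.circ (e.xi x) (e.xi y) with hndef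
    have hn' : S₂.inAnn n⁻¹ := aux_ann_inv S₂ (e.xi_circ x y)
    have h1 : e.xi (x * y) = (e.xi x * e.xi y) * m⁻¹ := by rw [hmdef]; group
    have h2 : e.xi (S₁.circ x y) = S₂.circ (e.xi x) (e.xi y) * n⁻¹ := by
      rw [hndef]; group
    rw [h1, aux_star_right_ann S₂ hm', h2, aux_star_right_ann S₂ hn',
      h (e.xi x) (e.xi y) (e.xi z)]
end

section
/- In a (right) skew brace (B, ·, ∘), the subgroup Ann(B) = Z(B, ·) ∩ ker(γ) ∩ C_B(γ(B)) is an ideal of the skew brace: it is a normal subgroup of both (B, ·) and (B, ∘), and is invariant under all γ(x) for x ∈ B. -/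
open RightSkewBrace

lemma RightSkewBrace.circ_one_left {B : Type*} [Group B] (S : RightSkewBrace B) (x : B) :
    S.circ 1 x = x := by
  have h := S.compat x 1 1
  simp only [one_mul] at h
  have h1 : S.circ 1 x * x⁻¹ = 1 := by
    have := mul_left_cancel (a := S.circ 1 x * x⁻¹)
      (b := (1 : B)) (c := S.circ 1 x * x⁻¹) (by rw [mul_one]; exact h)
    exact this.symm
  exact mul_inv_eq_one.mp h1

lemma RightSkewBrace.cone_eq_one_s15 {B : Type*} [Group B] (S : RightSkewBrace B) :
    S.cone = 1 := by
  have h1 : S.circ 1 S.cone = S.cone := S.circ_one_left S.cone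
  have h2 : S.circ 1 S.cone = 1 := S.circ_cone 1
  rw [h2] at h1; exact h1.symm

lemma RightSkewBrace.circ_one_right {B : Type*} [Group B] (S : RightSkewBrace B) (x : B) :
    S.circ x 1 = x := by
  have := S.circ_cone x
  rwa [S.cone_eq_one_s15] at this

/-- `Ann(B)` is an ideal of the skew brace: a subgroup of
`(B, ·)` that is normal in `(B, ·)`, normal in `(B, ∘)`, and invariant under
every `γ(x)`. -/
theorem ann_is_ideal {B : Type*} [Group B] (S : RightSkewBrace B) :
    S.inAnn 1 ∧
      (∀ c d : B, S.inAnn c → S.inAnn d → S.inAnn (c * d)) ∧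
      (∀ c : B, S.inAnn c → S.inAnn c⁻¹) ∧
      (∀ c x : B, S.inAnn c → S.inAnn (x⁻¹ * c * x)) ∧
      (∀ c x : B, S.inAnn c → S.inAnn (S.circ (S.circ (S.cinv x) c) x)) ∧
      (∀ c x : B, S.inAnn c → S.inAnn (S.gamma x c)) := by
  -- unfold helpers: for c ∈ Ann, circ y c = y * c and circ c y = c * y
  have key2 : ∀ c : B, S.inAnn c → ∀ y : B, S.circ y c = y * c := by
    intro c hc y
    have := hc.2.1 y
    unfold RightSkewBrace.gamma at this
    calc S.circ y c = (S.circ y c * c⁻¹) * c := by group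
      _ = y * c := by rw [this]
  have key3 : ∀ c : B, S.inAnn c → ∀ y : B, S.circ c y = c * y := by
    intro c hc y
    have := hc.2.2 y
    unfold RightSkewBrace.gamma at this
    calc S.circ c y = (S.circ c y * y⁻¹) * y := by group
      _ = c * y := by rw [this]
  have mk : ∀ c : B, (∀ x : B, c * x = x * c) → (∀ y : B, S.circ y c = y * c) →
      (∀ y : B, S.circ c y = c * y) → S.inAnn c := by
    intro c h1 h2 h3
    refine ⟨h1, fun y => ?_, fun y => ?_⟩ <;> unfold RightSkewBrace.gamma
    · rw [h2 y]; group
    · rw [h3 y]; group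
  refine ⟨?_, ?_, ?_, ?_, ?_, ?_⟩
  · exact mk 1 (fun x => by group) (fun y => S.circ_one_right y |>.trans (by group))
      (fun y => S.circ_one_left y |>.trans (by group))
  · -- product
    intro c d hc hd
    refine mk _ (fun x => by rw [mul_assoc, hd.1 x, ← mul_assoc, hc.1 x, mul_assoc])
      (fun y => ?_) (fun y => ?_)
    · calc S.circ y (c * d) = S.circ (S.circ y c) d := by rw [S.circ_assoc, key3 c hc d]
        _ = (y * c) * d := by rw [key2 c hc y, key2 d hd (y * c)]
        _ = y * (c * d) := by group
    · calc S.circ (c * d) y = S.circ c (S.circ d y) := by rw [← S.circ_assoc, key3 c hc d]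
        _ = c * (d * y) := by rw [key3 d hd y, key3 c hc (d * y)]
        _ = c * d * y := by group
  · -- inverse
    intro c hc
    have h1 : ∀ x : B, c⁻¹ * x = x * c⁻¹ := by
      intro x
      have := hc.1 x⁻¹
      calc c⁻¹ * x = (x⁻¹ * c)⁻¹ := by group
        _ = (c * x⁻¹)⁻¹ := by rw [← this]
        _ = x * c⁻¹ := by group
    have h3 : ∀ y : B, S.circ c⁻¹ y = c⁻¹ * y := by
      intro y
      have h := S.compat y c c⁻¹
      rw [mul_inv_cancel, S.circ_one_left, key3 c hc y] at h
      have h' : (1 : B) = c * (S.circ c⁻¹ y * y⁻¹) := by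
        calc (1 : B) = y * y⁻¹ := by group
          _ = c * y * y⁻¹ * (S.circ c⁻¹ y * y⁻¹) := h
          _ = c * (S.circ c⁻¹ y * y⁻¹) := by group
      have : S.circ c⁻¹ y * y⁻¹ = c⁻¹ := by
        calc S.circ c⁻¹ y * y⁻¹ = c⁻¹ * (c * (S.circ c⁻¹ y * y⁻¹)) := by group
          _ = c⁻¹ := by rw [← h']; group
      calc S.circ c⁻¹ y = (S.circ c⁻¹ y * y⁻¹) * y := by group
        _ = c⁻¹ * y := by rw [this]
    have h2 : ∀ y : B, S.circ y c⁻¹ = y * c⁻¹ := by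
      intro y
      have hcc : S.circ c⁻¹ c = 1 := by rw [key2 c hc c⁻¹]; group
      have : S.circ (S.circ y c⁻¹) c = y := by
        rw [S.circ_assoc, hcc, S.circ_one_right]
      rw [key2 c hc (S.circ y c⁻¹)] at this
      calc S.circ y c⁻¹ = (S.circ y c⁻¹ * c) * c⁻¹ := by group
        _ = y * c⁻¹ := by rw [this]
    exact mk c⁻¹ h1 h2 h3
  · -- additive conjugation
    intro c x hc
    have : x⁻¹ * c * x = c := by rw [← hc.1 x⁻¹]; group
    rw [this]; exact hc
  · -- circle conjugation
    intro c x hc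
    have hcomm : S.circ c x = S.circ x c := by
      rw [key3 c hc x, key2 c hc x, hc.1 x]
    have : S.circ (S.circ (S.cinv x) c) x = c := by
      rw [S.circ_assoc, hcomm, ← S.circ_assoc, S.cinv_circ, S.cone_eq_one_s15, S.circ_one_left]
    rw [this]; exact hc
  · -- gamma invariance
    intro c x hc
    have : S.gamma x c = c := hc.2.2 x
    rw [this]; exact hc
end
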